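/- Let $h(x) = -x \log_2 x - (1-x)\log_2(1-x)$ for $x \in (0,1)$ with $h(0)=h(1)=0$, and define $E(x) = h\left(\frac{1+\sqrt{1-x}}{2}\right)$ for $x \in [0,1]$. Let $C, C_1, \dots, C_n \in [0,1]$ satisfy $C^2 \geq \sum_{j=1}^n C_j^2$. Then $E(C^2)^2 \geq \sum_{j=1}^n E(C_j^2)^2$. (Monogamy of the squared entanglement of formation follows from monogamy of the squared concurrence.) -/

import Mathlib

/-- The Shannon binary entropy `h(x) = -x log₂ x - (1-x) log₂(1-x)`.
(With Mathlib's convention `log 0 = 0`, this automatically satisfies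
`h 0 = 0` and `h 1 = 0`.) -/
noncomputable def binaryEntropy (x : ℝ) : ℝ :=
  -x * Real.logb 2 x - (1 - x) * Real.logb 2 (1 - x)

/-- Entanglement of formation as a function of the squared concurrence:
`E(x) = h((1 + √(1-x))/2)`. -/
noncomputable def eofOfSqConc (x : ℝ) : ℝ :=
  binaryEntropy ((1 + Real.sqrt (1 - x)) / 2)

/-!
Write `f(x) = E(x)²`. As `f(0) = 0`, the inequality follows by summing `f(x_j) ≤ x_j · f(X) / X`
once `f(x) / x` is nondecreasing on `(0, 1]`. Substituting `p = (1 + √(1 - x)) / 2 ∈ [1/2, 1)`,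
which decreases in `x` and satisfies `4p(1 - p) = x`, this says that `h(p)² / (4p(1 - p))` is
nonincreasing on `[1/2, 1)`: its derivative has the sign of `(1 - p) log (1 - p) - p log p`,
which is nonpositive for `p ≥ 1/2`.
-/

open Real Set

lemma sum_le_of_monotoneOn_div {ι : Type*} {f : ℝ → ℝ} {b X : ℝ}
    (hf : MonotoneOn (fun x => f x / x) (Ioc 0 b)) (hf₀ : f 0 ≤ 0) (hXb : X ≤ b) (hfX : 0 ≤ f X)
    (s : Finset ι) {x : ι → ℝ} (hx : ∀ i ∈ s, 0 ≤ x i) (hsum : ∑ i ∈ s, x i ≤ X) :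
    ∑ i ∈ s, f (x i) ≤ f X := by
  have hX : 0 ≤ X := (Finset.sum_nonneg hx).trans hsum
  have hterm : ∀ i ∈ s, f (x i) ≤ x i * (f X / X) := by
    intro i hi
    rcases (hx i hi).eq_or_lt with h | h
    · simpa [← h] using hf₀
    have hxX : x i ≤ X := (Finset.single_le_sum hx hi).trans hsum
    exact (div_le_iff₀' h).1 (hf ⟨h, hxX.trans hXb⟩ ⟨h.trans_le hxX, hXb⟩ hxX)
  calc ∑ i ∈ s, f (x i) ≤ ∑ i ∈ s, x i * (f X / X) := Finset.sum_le_sum hterm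
    _ = (∑ i ∈ s, x i) * (f X / X) := (Finset.sum_mul ..).symm
    _ ≤ X * (f X / X) := mul_le_mul_of_nonneg_right hsum (div_nonneg hfX hX)
    _ ≤ f X := by
      rcases hX.eq_or_lt with rfl | hX
      · simpa using hfX
      · rw [mul_div_cancel₀ _ hX.ne']

lemma binaryEntropy_eq_binEntropy_div_log_two (x : ℝ) :
    binaryEntropy x = binEntropy x / log 2 := by
  rw [binaryEntropy, binEntropy_eq_negMulLog_add_negMulLog_one_sub, negMulLog, negMulLog,
    logb, logb]
  ring

lemma mul_log_le_one_sub_mul_log_one_sub {q : ℝ} (hq₀ : 0 ≤ q) (hq : q ≤ 1 / 2) :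
    q * log q ≤ (1 - q) * log (1 - q) := by
  rcases hq₀.eq_or_lt with rfl | hq₀
  · simp
  have hlog_q : log q ≤ 2 * q - 1 - log 2 := by
    have := log_le_sub_one_of_pos (by positivity : 0 < 2 * q)
    rw [log_mul two_ne_zero hq₀.ne'] at this
    linarith
  -- concavity of `log` along the chord from `1/2` to `1`, evaluated at `1 - q`
  have hlog_one_sub : -(2 * q) * log 2 ≤ log (1 - q) := by
    have := strictConcaveOn_log_Ioi.concaveOn.2 (mem_Ioi.2 one_half_pos) (mem_Ioi.2 one_pos)
      (by linarith : 0 ≤ 2 * q) (by linarith : 0 ≤ 1 - 2 * q) (by ring)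
    rw [smul_eq_mul, smul_eq_mul, smul_eq_mul, smul_eq_mul, one_div, log_inv, log_one,
      show 2 * q * 2⁻¹ + (1 - 2 * q) * 1 = 1 - q by ring] at this
    linarith
  have hlog_two : log 2 < 1 := by linarith [log_two_lt_d9]
  calc q * log q ≤ q * (2 * q - 1 - log 2) := by gcongr
    _ ≤ (1 - q) * (-(2 * q) * log 2) := by
      nlinarith [mul_nonneg (mul_nonneg hq₀.le (by linarith : 0 ≤ 1 - 2 * q))
        (by linarith : 0 ≤ 1 - log 2)]
    _ ≤ (1 - q) * log (1 - q) := by gcongr; linarith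

lemma hasDerivAt_binEntropy_sq_div {p : ℝ} (hp₀ : 0 < p) (hp₁ : p < 1) :
    HasDerivAt (fun p => binEntropy p ^ 2 / (4 * p * (1 - p)))
      (4 * binEntropy p * ((1 - p) * log (1 - p) - p * log p) / (4 * p * (1 - p)) ^ 2) p := by
  have hnum : HasDerivAt (fun p => binEntropy p ^ 2)
      (2 * binEntropy p * (log (1 - p) - log p)) p :=
    ((hasDerivAt_binEntropy hp₀.ne' hp₁.ne).pow 2).congr_deriv (by ring)
  have hden : HasDerivAt (fun p : ℝ => 4 * p * (1 - p)) (4 * (1 - p) - 4 * p) p :=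
    ((hasDerivAt_id' p |>.const_mul 4).mul (hasDerivAt_id' p |>.const_sub 1)).congr_deriv
      (by ring)
  refine (hnum.fun_div hden (by positivity)).congr_deriv ?_
  -- the quotient-rule numerator simplifies using `p + (1 - p) = 1`
  simp only [binEntropy_eq_negMulLog_add_negMulLog_one_sub, negMulLog]
  ring

lemma antitoneOn_binEntropy_sq_div :
    AntitoneOn (fun p => binEntropy p ^ 2 / (4 * p * (1 - p))) (Ico (1 / 2) 1) := by
  refine antitoneOn_of_hasDerivWithinAt_nonpos (convex_Ico _ _)
    (f' := fun p =>
      4 * binEntropy p * ((1 - p) * log (1 - p) - p * log p) / (4 * p * (1 - p)) ^ 2)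
    ?_ (fun p hp => ?_) (fun p hp => ?_)
  · refine ContinuousOn.div (by fun_prop) (by fun_prop) fun p ⟨hp₀, hp₁⟩ => ?_
    have : 0 < 1 - p := by linarith
    positivity
  all_goals obtain ⟨hp₀, hp₁⟩ : 1 / 2 < p ∧ p < 1 := by rwa [interior_Ico] at hp
  · exact (hasDerivAt_binEntropy_sq_div (by linarith) hp₁).hasDerivWithinAt
  · have hkey := mul_log_le_one_sub_mul_log_one_sub (q := 1 - p) (by linarith) (by linarith)
    rw [sub_sub_cancel] at hkey
    have := binEntropy_nonneg (p := p) (by linarith) hp₁.le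
    exact div_nonpos_of_nonpos_of_nonneg
      (mul_nonpos_of_nonneg_of_nonpos (by positivity) (by linarith)) (sq_nonneg _)

lemma one_add_sqrt_one_sub_div_two_mem_Ico {x : ℝ} (hx : 0 < x) :
    (1 + √(1 - x)) / 2 ∈ Ico (1 / 2) 1 := by
  have : √(1 - x) < 1 := (sqrt_lt' one_pos).2 (by linarith)
  constructor <;> linarith [sqrt_nonneg (1 - x)]

lemma four_mul_one_add_sqrt_one_sub_div_two {x : ℝ} (hx : x ≤ 1) :
    4 * ((1 + √(1 - x)) / 2) * (1 - (1 + √(1 - x)) / 2) = x := by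
  linear_combination -sq_sqrt (sub_nonneg.2 hx)

lemma monotoneOn_eofOfSqConc_sq_div :
    MonotoneOn (fun x => eofOfSqConc x ^ 2 / x) (Ioc 0 1) := by
  intro x ⟨hx₀, hx₁⟩ y ⟨hy₀, hy₁⟩ hxy
  have h := antitoneOn_binEntropy_sq_div (one_add_sqrt_one_sub_div_two_mem_Ico hy₀)
    (one_add_sqrt_one_sub_div_two_mem_Ico hx₀) (by gcongr)
  simp only [four_mul_one_add_sqrt_one_sub_div_two hx₁,
    four_mul_one_add_sqrt_one_sub_div_two hy₁] at h
  simp only [eofOfSqConc, binaryEntropy_eq_binEntropy_div_log_two, div_pow,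
    div_right_comm _ (log 2 ^ 2)]
  exact div_le_div_of_nonneg_right h (by positivity)

theorem sq_eof_monogamy_general
    (n : ℕ) (C : ℝ) (Cs : Fin n → ℝ)
    (hC : C ∈ Set.Icc (0:ℝ) 1)
    (hmono : ∑ j, Cs j ^ 2 ≤ C ^ 2) :
    ∑ j, eofOfSqConc (Cs j ^ 2) ^ 2 ≤ eofOfSqConc (C ^ 2) ^ 2 :=
  sum_le_of_monotoneOn_div (f := fun x => eofOfSqConc x ^ 2) monotoneOn_eofOfSqConc_sq_div
    (by simp [eofOfSqConc, binaryEntropy]) (pow_le_one₀ hC.1 hC.2) (sq_nonneg _) _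
    (fun j _ => sq_nonneg _) hmono

/-- **Monogamy of the squared entanglement of formation** follows from the
Coffman–Kundu–Wootters monogamy of the squared concurrence. -/
theorem sq_eof_monogamy
    (n : ℕ) (C : ℝ) (Cs : Fin n → ℝ)
    (hC : C ∈ Set.Icc (0:ℝ) 1) (hCs : ∀ j, Cs j ∈ Set.Icc (0:ℝ) 1)
    (hmono : ∑ j, Cs j ^ 2 ≤ C ^ 2) :
    ∑ j, eofOfSqConc (Cs j ^ 2) ^ 2 ≤ eofOfSqConc (C ^ 2) ^ 2 :=
  sq_eof_monogamy_general n C Cs hC hmono
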